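/- Energy-level dichotomy at and beyond the critical mass: for every p ∈ [4,6) and μ > 0, the ground-state energy level satisfies ℰ_p(μ) = 0 if μ ≤ μ_p, while −∞ < ℰ_p(μ) < 0 if μ > μ_p. -/

import Mathlib

/- Formalization of NLS ground states on the two-dimensional grid 𝒢
   (the planar metric graph with vertex set ℤ×ℤ and unit edges).

   A function `u` on 𝒢 is encoded by the family `h j` of its restrictions to
   the horizontal lines `H j` and the family `w k` of its restrictions to the
   vertical lines `V k`, subject to the vertex-compatibility conditions
   `h j k = w k j`.  The (weak) derivative of `u` along each line is carried
   as additional data `hd`, `wd`, tied to `h`, `w` by the fundamental theorem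
   of calculus in the membership predicates below. -/

open MeasureTheory Filter Topology
open scoped ENNReal NNReal

noncomputable section

/-- A function on the grid 𝒢, together with candidate derivatives along
horizontal and vertical lines. -/
structure GridFunc where
  /-- restriction to the horizontal line `H j` -/
  h : ℤ → ℝ → ℝ
  /-- restriction to the vertical line `V k` -/
  w : ℤ → ℝ → ℝ
  /-- derivative along the horizontal line `H j` -/
  hd : ℤ → ℝ → ℝ
  /-- derivative along the vertical line `V k` -/
  wd : ℤ → ℝ → ℝ
  /-- vertex compatibility: the values at the vertex `(k, j)` agree -/
  compat : ∀ j k : ℤ, h j (k : ℝ) = w k (j : ℝ)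

/-- `∑_j ∫_ℝ |f j|^p + ∑_k ∫_ℝ |g k|^p`, as an extended nonnegative real:
the `p`-th power of the `L^p(𝒢)` norm of the function encoded by `(f, g)`. -/
def gridLpPow (p : ℝ) (f g : ℤ → ℝ → ℝ) : ℝ≥0∞ :=
  (∑' j : ℤ, ∫⁻ x : ℝ, (‖f j x‖₊ : ℝ≥0∞) ^ p) +
  (∑' k : ℤ, ∫⁻ y : ℝ, (‖g k y‖₊ : ℝ≥0∞) ^ p)

/-- The `L^p(𝒢)` norm of `u`. -/
def GridFunc.lpNorm (u : GridFunc) (p : ℝ) : ℝ≥0∞ :=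
  gridLpPow p u.h u.w ^ (1 / p)

/-- The `L^p(𝒢)` norm of the derivative `u'`. -/
def GridFunc.derivLpNorm (u : GridFunc) (p : ℝ) : ℝ≥0∞ :=
  gridLpPow p u.hd u.wd ^ (1 / p)

/-- The `L^∞(𝒢)` norm of `u`: the sup over all lines of the sup norms. -/
def GridFunc.linfNorm (u : GridFunc) : ℝ≥0∞ :=
  (⨆ j : ℤ, ⨆ x : ℝ, (‖u.h j x‖₊ : ℝ≥0∞)) ⊔
  (⨆ k : ℤ, ⨆ y : ℝ, (‖u.w k y‖₊ : ℝ≥0∞))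

/-- `u ∈ H¹(𝒢)`: every line restriction is continuous and is recovered from
its (locally integrable) derivative by integration, and both `‖u‖₂²` and
`‖u'‖₂²` are finite. -/
def GridFunc.MemH1 (u : GridFunc) : Prop :=
  (∀ j, Continuous (u.h j)) ∧ (∀ k, Continuous (u.w k)) ∧
  (∀ j, LocallyIntegrable (u.hd j)) ∧ (∀ k, LocallyIntegrable (u.wd k)) ∧
  (∀ j x, (∫ t in (0:ℝ)..x, u.hd j t) = u.h j x - u.h j 0) ∧
  (∀ k y, (∫ t in (0:ℝ)..y, u.wd k t) = u.w k y - u.w k 0) ∧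
  gridLpPow 2 u.h u.w < ⊤ ∧ gridLpPow 2 u.hd u.wd < ⊤

/-- `u ∈ W^{1,1}(𝒢)`: every line restriction is continuous and is recovered
from its (integrable) derivative by integration, and both `‖u‖₁` and `‖u'‖₁`
are finite. -/
def GridFunc.MemW11 (u : GridFunc) : Prop :=
  (∀ j, Continuous (u.h j)) ∧ (∀ k, Continuous (u.w k)) ∧
  (∀ j, Integrable (u.hd j)) ∧ (∀ k, Integrable (u.wd k)) ∧
  (∀ j x, (∫ t in (0:ℝ)..x, u.hd j t) = u.h j x - u.h j 0) ∧
  (∀ k y, (∫ t in (0:ℝ)..y, u.wd k t) = u.w k y - u.w k 0) ∧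
  gridLpPow 1 u.h u.w < ⊤ ∧ gridLpPow 1 u.hd u.wd < ⊤

/-- The mass `‖u‖_{L²(𝒢)}²` of `u`, as a real number. -/
def GridFunc.mass (u : GridFunc) : ℝ :=
  (gridLpPow 2 u.h u.w).toReal

/-- The NLS energy `E_p(u) = ½‖u'‖₂² − (1/p)‖u‖_p^p`. -/
def GridFunc.energy (u : GridFunc) (p : ℝ) : ℝ :=
  (1 / 2) * (gridLpPow 2 u.hd u.wd).toReal
    - (1 / p) * (gridLpPow p u.h u.w).toReal

/-- `u` is not identically zero on 𝒢. -/
def GridFunc.Nonzero (u : GridFunc) : Prop :=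
  (∃ j x, u.h j x ≠ 0) ∨ (∃ k y, u.w k y ≠ 0)

/-- The Gagliardo–Nirenberg quotient
`Q_p(u) = ‖u‖_p^p / (‖u‖₂^{p−2} ‖u'‖₂²)`. -/
def GridFunc.gnQuot (u : GridFunc) (p : ℝ) : ℝ :=
  (gridLpPow p u.h u.w).toReal /
    ((gridLpPow 2 u.h u.w).toReal ^ ((p - 2) / 2) *
      (gridLpPow 2 u.hd u.wd).toReal)

/-- The set of Gagliardo–Nirenberg quotients `Q_p(u)` over nontrivial
`u ∈ H¹(𝒢)`; its supremum is the optimal constant `K_p`. -/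
def gnSet (p : ℝ) : Set ℝ :=
  {q | ∃ u : GridFunc, u.MemH1 ∧ u.Nonzero ∧ q = u.gnQuot p}

/-- The critical mass `μ_p = (p/(2K))^{2/(p−2)}` associated with the optimal
Gagliardo–Nirenberg constant `K`. -/
def critMass (p K : ℝ) : ℝ :=
  (p / (2 * K)) ^ (2 / (p - 2))

/-- The `H¹(𝒢)` inner product `⟨u,v⟩_{L²(𝒢)} + ⟨u',v'⟩_{L²(𝒢)}`. -/
def GridFunc.h1Inner (u v : GridFunc) : ℝ :=
  ((∑' j : ℤ, ∫ x : ℝ, u.h j x * v.h j x) +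
    (∑' k : ℤ, ∫ y : ℝ, u.w k y * v.w k y)) +
  ((∑' j : ℤ, ∫ x : ℝ, u.hd j x * v.hd j x) +
    (∑' k : ℤ, ∫ y : ℝ, u.wd k y * v.wd k y))

/-- The set of energies `E_p(u)` of functions `u ∈ H¹_μ(𝒢)`; its infimum is
the ground-state energy level `ℰ_p(μ)`. -/
def energySet (p μ : ℝ) : Set ℝ :=
  {e | ∃ u : GridFunc, u.MemH1 ∧ u.mass = μ ∧ u.energy p = e}

/-- `u` is a ground state of mass `μ`: it belongs to `H¹_μ(𝒢)` and minimizes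
the energy `E_p` there. -/
def IsGroundState (p μ : ℝ) (u : GridFunc) : Prop :=
  u.MemH1 ∧ u.mass = μ ∧
    ∀ v : GridFunc, v.MemH1 → v.mass = μ → u.energy p ≤ v.energy p

end


noncomputable section AuxLemmas


/-- pointwise bridge -/
lemma nnnorm_rpow_eq_ofReal (t q : ℝ) (hq : 0 ≤ q) :
    (‖t‖₊ : ℝ≥0∞) ^ q = ENNReal.ofReal (|t| ^ q) := by
  rw [← enorm_eq_nnnorm, Real.enorm_eq_ofReal_abs, ENNReal.ofReal_rpow_of_nonneg (abs_nonneg t) hq]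

lemma lintegral_nnnorm_rpow_eq {f : ℝ → ℝ} {q : ℝ} (hq : 0 ≤ q)
    (hi : Integrable (fun x => |f x| ^ q)) :
    ∫⁻ x, (‖f x‖₊ : ℝ≥0∞) ^ q = ENNReal.ofReal (∫ x, |f x| ^ q) := by
  rw [ofReal_integral_eq_lintegral_ofReal hi
    (Filter.Eventually.of_forall fun x => Real.rpow_nonneg (abs_nonneg _) q)]
  simp_rw [nnnorm_rpow_eq_ofReal _ q hq]

lemma tsum_nnnorm_rpow_eq {a : ℤ → ℝ} {q : ℝ} (hq : 0 ≤ q)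
    (hs : Summable (fun j => |a j| ^ q)) :
    ∑' j : ℤ, ((‖a j‖₊ : ℝ≥0∞)) ^ q = ENNReal.ofReal (∑' j : ℤ, |a j| ^ q) := by
  rw [ENNReal.ofReal_tsum_of_nonneg (fun n => Real.rpow_nonneg (abs_nonneg _) q) hs]
  simp_rw [nnnorm_rpow_eq_ofReal _ q hq]

lemma gridLpPow_prod {q : ℝ} (hq : 0 < q) (a : ℤ → ℝ) (f : ℝ → ℝ)
    (hfi : Integrable (fun x => |f x| ^ q))
    (hsa : Summable (fun j : ℤ => |a j| ^ q)) :
    gridLpPow q (fun j x => a j * f x) (fun k y => a k * f y)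
      = ENNReal.ofReal (2 * (∑' j : ℤ, |a j| ^ q) * ∫ x, |f x| ^ q) := by
  have hptw : ∀ (j : ℤ) (x : ℝ), (‖a j * f x‖₊ : ℝ≥0∞) ^ q
      = ENNReal.ofReal (|a j| ^ q) * ((‖f x‖₊ : ℝ≥0∞) ^ q) := by
    intro j x
    rw [nnnorm_rpow_eq_ofReal _ q hq.le, nnnorm_rpow_eq_ofReal _ q hq.le, abs_mul,
      Real.mul_rpow (abs_nonneg _) (abs_nonneg _),
      ENNReal.ofReal_mul (Real.rpow_nonneg (abs_nonneg _) _)]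
  have hline : ∀ j : ℤ, (∫⁻ x, (‖a j * f x‖₊ : ℝ≥0∞) ^ q)
      = ENNReal.ofReal (|a j| ^ q) * ENNReal.ofReal (∫ x, |f x| ^ q) := by
    intro j
    simp_rw [hptw j]
    rw [lintegral_const_mul' _ _ ENNReal.ofReal_ne_top,
      lintegral_nnnorm_rpow_eq hq.le hfi]
  have hsum : (∑' j : ℤ, ∫⁻ x, (‖a j * f x‖₊ : ℝ≥0∞) ^ q)
      = ENNReal.ofReal ((∑' j : ℤ, |a j| ^ q) * ∫ x, |f x| ^ q) := by
    simp_rw [hline]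
    rw [ENNReal.tsum_mul_right,
      ← ENNReal.ofReal_tsum_of_nonneg (fun j => Real.rpow_nonneg (abs_nonneg _) _) hsa,
      ← ENNReal.ofReal_mul (tsum_nonneg fun j => Real.rpow_nonneg (abs_nonneg _) _)]
  have h2 : (0:ℝ) ≤ (∑' j : ℤ, |a j| ^ q) * ∫ x, |f x| ^ q :=
    mul_nonneg (tsum_nonneg fun j => Real.rpow_nonneg (abs_nonneg _) _)
      (integral_nonneg fun x => Real.rpow_nonneg (abs_nonneg _) _)
  rw [gridLpPow, hsum, ← ENNReal.ofReal_add h2 h2]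
  ring_nf

lemma gridLpPow_smul {q : ℝ} (hq : 0 < q) (c : ℝ) (f g : ℤ → ℝ → ℝ) :
    gridLpPow q (fun j x => c * f j x) (fun k y => c * g k y)
      = ENNReal.ofReal (|c| ^ q) * gridLpPow q f g := by
  have hptw : ∀ (t : ℝ), (‖c * t‖₊ : ℝ≥0∞) ^ q
      = ENNReal.ofReal (|c| ^ q) * ((‖t‖₊ : ℝ≥0∞) ^ q) := by
    intro t
    rw [nnnorm_rpow_eq_ofReal _ q hq.le, nnnorm_rpow_eq_ofReal _ q hq.le, abs_mul,
      Real.mul_rpow (abs_nonneg _) (abs_nonneg _),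
      ENNReal.ofReal_mul (Real.rpow_nonneg (abs_nonneg _) _)]
  simp_rw [gridLpPow, hptw, lintegral_const_mul' _ _ ENNReal.ofReal_ne_top,
    ENNReal.tsum_mul_left, mul_add]

lemma abs_rpow_two (t : ℝ) : |t| ^ (2:ℝ) = t ^ 2 := by
  rw [show (2:ℝ) = ((2:ℕ):ℝ) by norm_num, Real.rpow_natCast, sq_abs]

lemma exp_rpow' (t q : ℝ) : (Real.exp t) ^ (q:ℝ) = Real.exp (q * t) := by
  rw [Real.rpow_def_of_pos (Real.exp_pos t), Real.log_exp, mul_comm]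

/-- The Gaussian bump with parameter `σ`. -/
def bump (σ : ℝ) (x : ℝ) : ℝ := Real.exp (-σ * x^2)

/-- Its derivative. -/
def bumpd (σ : ℝ) (x : ℝ) : ℝ := (-(2*σ*x)) * Real.exp (-σ * x^2)

lemma bump_hasDeriv (σ x : ℝ) : HasDerivAt (bump σ) (bumpd σ x) x := by
  have h1 : HasDerivAt (fun x : ℝ => -σ * x^2) (-σ * (2*x)) x := by
    simpa using ((hasDerivAt_pow 2 x).const_mul (-σ))
  have h2 := h1.exp
  convert h2 using 1
  · rfl
  · unfold bumpd; ring

lemma continuous_bump (σ : ℝ) : Continuous (bump σ) := by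
  unfold bump; fun_prop

lemma continuous_bumpd (σ : ℝ) : Continuous (bumpd σ) := by
  unfold bumpd; fun_prop

lemma abs_bump_rpow (σ q x : ℝ) : |bump σ x| ^ (q:ℝ) = Real.exp (-(q*σ) * x^2) := by
  rw [bump, abs_of_pos (Real.exp_pos _), exp_rpow']
  ring_nf

lemma summable_exp_neg_int_sq {β : ℝ} (hβ : 0 < β) :
    Summable (fun j : ℤ => Real.exp (-β * (j:ℝ)^2)) := by
  have key : Summable (fun n : ℕ => Real.exp (-β * (n:ℝ)^2)) := by
    apply Summable.of_nonneg_of_le (fun n => (Real.exp_pos _).le)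
      (fun n => ?_) (summable_geometric_of_lt_one (Real.exp_pos (-β)).le
        (Real.exp_lt_one_iff.mpr (by linarith)))
    rw [← Real.exp_nat_mul]
    apply Real.exp_le_exp.mpr
    have : (n:ℝ) ≤ (n:ℝ)^2 := by exact_mod_cast Nat.le_self_pow (by norm_num) n
    nlinarith
  apply Summable.of_nat_of_neg <;> · simpa using key

lemma summable_abs_bump_rpow {σ q : ℝ} (hσ : 0 < σ) (hq : 0 < q) :
    Summable (fun j : ℤ => |bump σ (j:ℝ)| ^ (q:ℝ)) := by
  simpa [abs_bump_rpow] using summable_exp_neg_int_sq (mul_pos hq hσ)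

lemma integrable_abs_bump_rpow {σ q : ℝ} (hσ : 0 < σ) (hq : 0 < q) :
    Integrable (fun x => |bump σ x| ^ (q:ℝ)) := by
  simpa [abs_bump_rpow] using integrable_exp_neg_mul_sq (mul_pos hq hσ)

lemma mul_exp_neg_le {s : ℝ} (hs : 0 ≤ s) : s * Real.exp (-s) ≤ Real.exp (-(s/2)) := by
  have h2 : Real.exp (s/2) = Real.exp (s/4) * Real.exp (s/4) := by
    rw [← Real.exp_add]; ring_nf
  have e := Real.add_one_le_exp (s/4)
  have h1 : s ≤ Real.exp (s/2) := by nlinarith [sq_nonneg (1 - s/4), Real.exp_pos (s/4)]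
  have h3 : Real.exp (-s) = Real.exp (-(s/2)) * Real.exp (-(s/2)) := by
    rw [← Real.exp_add]; ring_nf
  have h4 : s * Real.exp (-(s/2)) ≤ Real.exp (s/2) * Real.exp (-(s/2)) := by
    apply mul_le_mul_of_nonneg_right h1 (Real.exp_pos _).le
  rw [← Real.exp_add] at h4
  simp only [add_neg_cancel, Real.exp_zero] at h4
  calc s * Real.exp (-s) = (s * Real.exp (-(s/2))) * Real.exp (-(s/2)) := by
        rw [h3]; ring
    _ ≤ 1 * Real.exp (-(s/2)) := mul_le_mul_of_nonneg_right h4 (Real.exp_pos _).le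
    _ = Real.exp (-(s/2)) := one_mul _

lemma bumpd_sq_le {σ : ℝ} (hσ : 0 < σ) (x : ℝ) :
    (bumpd σ x)^2 ≤ 2*σ * Real.exp (-σ * x^2) := by
  have hs : (0:ℝ) ≤ 2*σ*x^2 := by positivity
  have key := mul_exp_neg_le hs
  have e1 : Real.exp (-(2*σ*x^2)) = Real.exp (-σ*x^2) * Real.exp (-σ*x^2) := by
    rw [← Real.exp_add]; ring_nf
  have e2 : Real.exp (-(2*σ*x^2)/2) = Real.exp (-σ*x^2) := by ring_nf
  have : (2*σ*x^2) * Real.exp (-(2*σ*x^2)) ≤ Real.exp (-σ*x^2) := by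
    simpa [show (-(2*σ*x^2/2)) = -σ*x^2 by ring] using key
  have expand : (bumpd σ x)^2 = 2*σ * ((2*σ*x^2) * Real.exp (-(2*σ*x^2))) := by
    rw [bumpd, e1]; ring
  rw [expand]
  apply mul_le_mul_of_nonneg_left this (by positivity)

lemma integrable_bumpd_sq {σ : ℝ} (hσ : 0 < σ) :
    Integrable (fun x => |bumpd σ x| ^ (2:ℝ)) := by
  simp_rw [abs_rpow_two]
  apply Integrable.mono' ((integrable_exp_neg_mul_sq hσ).const_mul (2*σ))
    (((continuous_bumpd σ).pow 2).aestronglyMeasurable)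
  refine Filter.Eventually.of_forall fun x => ?_
  rw [Real.norm_eq_abs, abs_of_nonneg (sq_nonneg _)]
  exact bumpd_sq_le hσ x

lemma integral_bumpd_sq_le {σ : ℝ} (hσ : 0 < σ) :
    (∫ x, |bumpd σ x| ^ (2:ℝ)) ≤ 2*σ * Real.sqrt (Real.pi / σ) := by
  have h1 : (∫ x, |bumpd σ x| ^ (2:ℝ)) ≤ ∫ x, 2*σ * Real.exp (-σ * x^2) := by
    apply integral_mono (integrable_bumpd_sq hσ)
      ((integrable_exp_neg_mul_sq hσ).const_mul (2*σ))
    intro x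
    simp only [abs_rpow_two]
    exact bumpd_sq_le hσ x
  calc (∫ x, |bumpd σ x| ^ (2:ℝ)) ≤ ∫ x, 2*σ * Real.exp (-σ * x^2) := h1
    _ = 2*σ * ∫ x, Real.exp (-σ * x^2) := by rw [MeasureTheory.integral_const_mul]
    _ = 2*σ * Real.sqrt (Real.pi / σ) := by rw [integral_gaussian]

/-- The product test function on the grid. -/
def gridU (c σ : ℝ) : GridFunc where
  h := fun j x => (c * bump σ (j:ℝ)) * bump σ x
  w := fun k y => (c * bump σ (k:ℝ)) * bump σ y
  hd := fun j x => (c * bump σ (j:ℝ)) * bumpd σ x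
  wd := fun k y => (c * bump σ (k:ℝ)) * bumpd σ y
  compat := fun j k => by ring

def Sq (σ q : ℝ) : ℝ := ∑' j : ℤ, |bump σ (j:ℝ)| ^ (q:ℝ)
def Iq (σ q : ℝ) : ℝ := ∫ x, |bump σ x| ^ (q:ℝ)
def Gg (σ : ℝ) : ℝ := ∫ x, |bumpd σ x| ^ (2:ℝ)

lemma summable_c_bump {σ q : ℝ} (c : ℝ) (hσ : 0 < σ) (hq : 0 < q) :
    Summable (fun j : ℤ => |c * bump σ (j:ℝ)| ^ (q:ℝ)) := by
  have : (fun j : ℤ => |c * bump σ (j:ℝ)| ^ (q:ℝ))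
      = fun j : ℤ => |c| ^ (q:ℝ) * |bump σ (j:ℝ)| ^ (q:ℝ) := by
    funext j; rw [abs_mul, Real.mul_rpow (abs_nonneg _) (abs_nonneg _)]
  rw [this]
  exact (summable_abs_bump_rpow hσ hq).mul_left _

lemma tsum_c_bump {σ q : ℝ} (c : ℝ) :
    (∑' j : ℤ, |c * bump σ (j:ℝ)| ^ (q:ℝ)) = |c| ^ (q:ℝ) * Sq σ q := by
  rw [Sq, ← tsum_mul_left]
  congr 1; funext j; rw [abs_mul, Real.mul_rpow (abs_nonneg _) (abs_nonneg _)]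

lemma gridU_lpPow {c σ q : ℝ} (hσ : 0 < σ) (hq : 0 < q) :
    gridLpPow q (gridU c σ).h (gridU c σ).w
      = ENNReal.ofReal (2 * (|c| ^ (q:ℝ) * Sq σ q) * Iq σ q) := by
  rw [show (gridU c σ).h = fun (j:ℤ) x => (c * bump σ (j:ℝ)) * bump σ x from rfl,
    show (gridU c σ).w = fun (k:ℤ) y => (c * bump σ (k:ℝ)) * bump σ y from rfl,
    gridLpPow_prod hq _ _ (integrable_abs_bump_rpow hσ hq) (summable_c_bump c hσ hq),
    tsum_c_bump, Iq]

lemma gridU_gradPow {c σ : ℝ} (hσ : 0 < σ) :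
    gridLpPow 2 (gridU c σ).hd (gridU c σ).wd
      = ENNReal.ofReal (2 * (c ^ 2 * Sq σ 2) * Gg σ) := by
  rw [show (gridU c σ).hd = fun (j:ℤ) x => (c * bump σ (j:ℝ)) * bumpd σ x from rfl,
    show (gridU c σ).wd = fun (k:ℤ) y => (c * bump σ (k:ℝ)) * bumpd σ y from rfl,
    gridLpPow_prod (by norm_num : (0:ℝ) < 2) _ _ (integrable_bumpd_sq hσ)
      (summable_c_bump c hσ (by norm_num)),
    tsum_c_bump, Gg, abs_rpow_two]

lemma gridU_mass {c σ : ℝ} (hσ : 0 < σ) :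
    (gridU c σ).mass = 2 * (c ^ 2 * Sq σ 2) * Iq σ 2 := by
  rw [GridFunc.mass, gridU_lpPow hσ (by norm_num : (0:ℝ) < 2), abs_rpow_two,
    ENNReal.toReal_ofReal]
  have h1 : (0:ℝ) ≤ Sq σ 2 := tsum_nonneg fun j => Real.rpow_nonneg (abs_nonneg _) _
  have h2 : (0:ℝ) ≤ Iq σ 2 := integral_nonneg fun x => Real.rpow_nonneg (abs_nonneg _) _
  positivity

lemma Sq_pos {σ q : ℝ} (hσ : 0 < σ) (hq : 0 < q) : 0 < Sq σ q := by
  have h0 : |bump σ ((0:ℤ):ℝ)| ^ (q:ℝ) = 1 := by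
    norm_num [bump, abs_of_pos (Real.exp_pos _)]
  have := Summable.le_tsum (summable_abs_bump_rpow hσ hq) 0
    (fun j _ => Real.rpow_nonneg (abs_nonneg _) _)
  rw [h0] at this
  exact lt_of_lt_of_le one_pos this

lemma Sq_nonneg (σ q : ℝ) : 0 ≤ Sq σ q :=
  tsum_nonneg fun j => Real.rpow_nonneg (abs_nonneg _) _

lemma Iq_eq {σ q : ℝ} : Iq σ q = Real.sqrt (Real.pi / (q * σ)) := by
  rw [Iq]
  simp_rw [abs_bump_rpow]
  rw [integral_gaussian]

lemma Iq_pos {σ q : ℝ} (hσ : 0 < σ) (hq : 0 < q) : 0 < Iq σ q := by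
  rw [Iq_eq]
  exact Real.sqrt_pos.mpr (by positivity)

lemma Gg_nonneg (σ : ℝ) : 0 ≤ Gg σ :=
  integral_nonneg fun x => Real.rpow_nonneg (abs_nonneg _) _

lemma Gg_pos {σ : ℝ} (hσ : 0 < σ) : 0 < Gg σ := by
  rw [Gg]
  rw [integral_pos_iff_support_of_nonneg_ae
    (Filter.Eventually.of_forall fun x => Real.rpow_nonneg (abs_nonneg _) _)
    (integrable_bumpd_sq hσ)]
  have hsub : Set.Ioi (0:ℝ) ⊆ Function.support (fun x => |bumpd σ x| ^ (2:ℝ)) := by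
    intro x hx
    have hxo : (0:ℝ) < x := hx
    have hb : bumpd σ x ≠ 0 := by
      rw [bumpd]
      apply mul_ne_zero _ (Real.exp_ne_zero _)
      intro hc
      nlinarith
    simp only [Function.mem_support]
    rw [abs_rpow_two]
    positivity
  calc (0:ℝ≥0∞) < ⊤ := by norm_num
    _ = volume (Set.Ioi (0:ℝ)) := Real.volume_Ioi.symm
    _ ≤ volume (Function.support (fun x => |bumpd σ x| ^ (2:ℝ))) := measure_mono hsub

lemma gridU_memH1 {c σ : ℝ} (hσ : 0 < σ) : (gridU c σ).MemH1 := by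
  have hcont : ∀ a : ℝ, Continuous (fun x => a * bump σ x) :=
    fun a => continuous_const.mul (continuous_bump σ)
  have hcontd : ∀ a : ℝ, Continuous (fun x => a * bumpd σ x) :=
    fun a => continuous_const.mul (continuous_bumpd σ)
  have hftc : ∀ (a : ℝ) (x : ℝ), (∫ t in (0:ℝ)..x, a * bumpd σ t)
      = a * bump σ x - a * bump σ 0 := by
    intro a x
    rw [intervalIntegral.integral_const_mul,
      intervalIntegral.integral_eq_sub_of_hasDerivAt
        (fun t _ => bump_hasDeriv σ t)
        ((continuous_bumpd σ).intervalIntegrable _ _)]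
    ring
  refine ⟨fun j => hcont _, fun k => hcont _, fun j => (hcontd _).locallyIntegrable,
    fun k => (hcontd _).locallyIntegrable, fun j x => hftc _ x, fun k y => hftc _ y, ?_, ?_⟩
  · rw [gridU_lpPow hσ (by norm_num : (0:ℝ) < 2)]; exact ENNReal.ofReal_lt_top
  · rw [gridU_gradPow hσ]; exact ENNReal.ofReal_lt_top

lemma exists_energy_le {p μ σ : ℝ} (hp : 0 < p) (hμ : 0 < μ) (hσ : 0 < σ) :
    ∃ u : GridFunc, u.MemH1 ∧ u.mass = μ ∧ u.energy p ≤ Real.sqrt 2 * σ * μ := by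
  have hS := Sq_pos hσ (by norm_num : (0:ℝ) < 2)
  have hI := Iq_pos hσ (by norm_num : (0:ℝ) < 2)
  set c := Real.sqrt (μ / (2 * Sq σ 2 * Iq σ 2)) with hc
  have hc2 : c^2 = μ / (2 * Sq σ 2 * Iq σ 2) := Real.sq_sqrt (by positivity)
  have hmass : (gridU c σ).mass = μ := by
    rw [gridU_mass hσ, hc2]; field_simp
  refine ⟨gridU c σ, gridU_memH1 hσ, hmass, ?_⟩
  have hGg0 := Gg_nonneg σ
  rw [GridFunc.energy, gridU_gradPow hσ,
    ENNReal.toReal_ofReal (mul_nonneg (by positivity) hGg0)]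
  have hP : 0 ≤ (1/p) * (gridLpPow p (gridU c σ).h (gridU c σ).w).toReal := by positivity
  -- bound on Gg σ in terms of Iq σ 2
  have hG2 : Gg σ ≤ 2*σ*(Real.sqrt 2 * Iq σ 2) := by
    have h1 : Gg σ ≤ 2*σ*Real.sqrt (Real.pi / σ) := integral_bumpd_sq_le hσ
    have h2 : Real.sqrt (Real.pi / σ) = Real.sqrt 2 * Iq σ 2 := by
      rw [Iq_eq, ← Real.sqrt_mul (by norm_num : (0:ℝ) ≤ 2)]
      congr 1
      field_simp
    rw [← h2]; exact h1
  -- 2 * (c^2 * Sq σ 2) * Iq σ 2 = μ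
  have hmass' : 2 * (c^2 * Sq σ 2) * Iq σ 2 = μ := by rw [← gridU_mass hσ, hmass]
  have hA : 0 ≤ 2 * (c^2 * Sq σ 2) := by positivity
  have key : 2 * (c^2 * Sq σ 2) * Gg σ ≤ 2 * (Real.sqrt 2 * σ * μ) := by
    have h3 := mul_le_mul_of_nonneg_left hG2 hA
    calc 2 * (c^2 * Sq σ 2) * Gg σ ≤ 2 * (c^2 * Sq σ 2) * (2*σ*(Real.sqrt 2 * Iq σ 2)) := h3
      _ = 2 * Real.sqrt 2 * σ * (2 * (c^2 * Sq σ 2) * Iq σ 2) := by ring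
      _ = 2 * (Real.sqrt 2 * σ * μ) := by rw [hmass']; ring
  linarith

lemma mem_gnSet {p : ℝ} (u : GridFunc) (hu : u.MemH1) (hnz : u.Nonzero) :
    u.gnQuot p ∈ gnSet p := ⟨u, hu, hnz, rfl⟩

lemma K_pos {p K : ℝ} (hp : 0 < p) (hK : IsLUB (gnSet p) K) : 0 < K := by
  have h1 : (0:ℝ) < 1 := one_pos
  have hu := gridU_memH1 (c := 1) h1
  have hnz : (gridU 1 1).Nonzero := by
    left
    refine ⟨0, 0, ?_⟩
    show (1 * bump 1 ((0:ℤ):ℝ)) * bump 1 0 ≠ 0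
    norm_num [bump]
  have hq : 0 < (gridU 1 1).gnQuot p := by
    rw [GridFunc.gnQuot, gridU_lpPow h1 hp, gridU_lpPow h1 (by norm_num : (0:ℝ) < 2),
      gridU_gradPow h1, abs_rpow_two]
    have hSp := Sq_pos h1 hp
    have hIp := Iq_pos h1 hp
    have hS2 := Sq_pos h1 (by norm_num : (0:ℝ) < 2)
    have hI2 := Iq_pos h1 (by norm_num : (0:ℝ) < 2)
    have hGg := Gg_pos h1
    rw [ENNReal.toReal_ofReal (by positivity), ENNReal.toReal_ofReal (by positivity),
      ENNReal.toReal_ofReal (by positivity)]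
    have habs : |(1:ℝ)| ^ (p:ℝ) = 1 := by norm_num
    rw [habs]
    apply div_pos (by positivity)
    apply mul_pos _ (by positivity)
    apply Real.rpow_pos_of_pos
    positivity
  exact lt_of_lt_of_le hq (hK.1 (mem_gnSet _ hu hnz))

lemma locInt_intervalIntegrable {g : ℝ → ℝ}
    (hg : LocallyIntegrable g volume) (a b : ℝ) : IntervalIntegrable g volume a b := by
  rw [intervalIntegrable_iff]
  exact (hg.integrableOn_isCompact isCompact_uIcc).mono_set Set.uIoc_subset_uIcc

lemma nnnorm_sq_eq (t : ℝ) : ((‖t^2‖₊ : ℝ≥0∞)) = (‖t‖₊ : ℝ≥0∞) ^ (2:ℝ) := by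
  rw [← enorm_eq_nnnorm, Real.enorm_eq_ofReal_abs, nnnorm_rpow_eq_ofReal t 2 (by norm_num), abs_rpow_two,
    abs_of_nonneg (sq_nonneg t)]

lemma integrable_sq_of_lintegral_ne_top {f : ℝ → ℝ} (hm : AEStronglyMeasurable f volume)
    (hfin : (∫⁻ t, (‖f t‖₊ : ℝ≥0∞) ^ (2:ℝ)) ≠ ⊤) :
    Integrable (fun t => f t ^ 2) := by
  refine ⟨(hm.mul hm).congr (Filter.Eventually.of_forall fun t => (sq (f t)).symm), ?_⟩
  show (∫⁻ t, (‖f t ^ 2‖₊ : ℝ≥0∞)) < ⊤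
  simp_rw [nnnorm_sq_eq]
  exact hfin.lt_top

lemma integral_sq_eq_toReal {f : ℝ → ℝ} (hi : Integrable (fun t => f t ^ 2)) :
    ∫ t, f t ^ 2 = (∫⁻ t, (‖f t‖₊ : ℝ≥0∞) ^ (2:ℝ)).toReal := by
  have e : (fun t => |f t| ^ (2:ℝ)) = (fun t => f t ^ 2) := funext fun t => abs_rpow_two _
  rw [lintegral_nnnorm_rpow_eq (by norm_num : (0:ℝ) ≤ 2) (e ▸ hi), e,
    ENNReal.toReal_ofReal (integral_nonneg fun t => sq_nonneg _)]

/-- One-dimensional Gagliardo–Nirenberg-type sup bound (with constant 4). -/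
lemma oneDim_sup_sq {f g : ℝ → ℝ} (hf : Continuous f) (hg : LocallyIntegrable g volume)
    (hftc : ∀ x, (∫ t in (0:ℝ)..x, g t) = f x - f 0)
    (hf2 : Integrable (fun t => f t ^ 2)) (hg2 : Integrable (fun t => g t ^ 2)) (x : ℝ) :
    f x ^ 2 ≤ 4 * (Real.sqrt (∫ t, f t ^ 2) * Real.sqrt (∫ t, g t ^ 2)) := by
  set A := ∫ t, f t ^ 2 with hA
  set B := ∫ t, g t ^ 2 with hB
  have hA0 : 0 ≤ A := integral_nonneg fun t => sq_nonneg _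
  have hB0 : 0 ≤ B := integral_nonneg fun t => sq_nonneg _
  rcases eq_or_lt_of_le hB0 with hBz | hBpos
  · -- g ≡ 0 a.e., so f is constant, and integrable constant square forces f ≡ 0
    have hgz : (fun t => g t ^ 2) =ᵐ[volume] 0 :=
      (integral_eq_zero_iff_of_nonneg (fun t => sq_nonneg _) hg2).mp hBz.symm
    have hgz' : ∀ᵐ t, g t = 0 := by
      filter_upwards [hgz] with t ht
      exact pow_eq_zero_iff (by norm_num) |>.mp ht
    have hconst : ∀ y, f y = f 0 := by
      intro y
      have : (∫ t in (0:ℝ)..y, g t) = ∫ t in (0:ℝ)..y, (0:ℝ) :=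
        intervalIntegral.integral_congr_ae (by filter_upwards [hgz'] with t ht _; exact ht)
      rw [intervalIntegral.integral_zero] at this
      have := hftc y
      rw [‹(∫ t in (0:ℝ)..y, g t) = 0›] at this
      linarith
    have hf0 : f 0 = 0 := by
      by_contra hne
      have : Integrable (fun _ : ℝ => f 0 ^ 2) := by
        apply hf2.congr
        filter_upwards with t
        rw [hconst t]
      rw [integrable_const_iff] at this
      rcases this with h | h
      · exact hne (pow_eq_zero_iff (by norm_num) |>.mp h)
      · haveI := h; exact (measure_lt_top volume Set.univ).ne Real.volume_univ
    rw [hconst x, hf0]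
    have := Real.sqrt_nonneg A
    have := Real.sqrt_nonneg B
    nlinarith
  rcases eq_or_lt_of_le hA0 with hAz | hApos
  · -- f² has zero integral, f continuous, so f ≡ 0
    have hfz : (fun t => f t ^ 2) =ᵐ[volume] 0 :=
      (integral_eq_zero_iff_of_nonneg (fun t => sq_nonneg _) hf2).mp hAz.symm
    have : (fun t => f t ^ 2) = (fun _ => (0:ℝ)) :=
      (Continuous.ae_eq_iff_eq volume (by fun_prop) continuous_const).mp hfz
    have hx : f x ^ 2 = 0 := congrFun this x
    rw [hx]
    have := Real.sqrt_nonneg A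
    have := Real.sqrt_nonneg B
    nlinarith
  -- main case : A > 0, B > 0
  set L : ℝ := Real.sqrt A / Real.sqrt B with hL
  have hsA : 0 < Real.sqrt A := Real.sqrt_pos.mpr hApos
  have hsB : 0 < Real.sqrt B := Real.sqrt_pos.mpr hBpos
  have hLpos : 0 < L := div_pos hsA hsB
  -- find a point y₀ in [x - L, x] where f² is minimal
  obtain ⟨y₀, hy₀mem, hy₀min⟩ := isCompact_Icc.exists_isMinOn
    (Set.nonempty_Icc.mpr (by linarith : x - L ≤ x))
    ((hf.pow 2).continuousOn : ContinuousOn (fun t => f t ^ 2) (Set.Icc (x - L) x))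
  have hy₀le : y₀ ≤ x := hy₀mem.2
  have hy₀ge : x - L ≤ y₀ := hy₀mem.1
  -- Bound 1 : L * f y₀ ^ 2 ≤ A
  have bound1 : L * f y₀ ^ 2 ≤ A := by
    have h1 : (∫ t in (x - L)..x, f y₀ ^ 2) ≤ ∫ t in (x - L)..x, f t ^ 2 := by
      apply intervalIntegral.integral_mono_on (by linarith)
        (intervalIntegrable_const) (hf2.intervalIntegrable)
      intro t ht
      exact hy₀min ht
    rw [intervalIntegral.integral_const, smul_eq_mul] at h1
    have h2 : (∫ t in (x - L)..x, f t ^ 2) ≤ A := by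
      rw [intervalIntegral.integral_of_le (by linarith : x - L ≤ x)]
      exact setIntegral_le_integral hf2 (Filter.Eventually.of_forall fun t => sq_nonneg _)
    calc L * f y₀ ^ 2 = (x - (x - L)) * f y₀ ^ 2 := by ring_nf
      _ ≤ ∫ t in (x - L)..x, f t ^ 2 := h1
      _ ≤ A := h2
  -- Bound 2 : |f x - f y₀| ≤ sqrt L * sqrt B
  have bound2 : |f x - f y₀| ≤ Real.sqrt L * Real.sqrt B := by
    have hint : ∀ a b : ℝ, IntervalIntegrable g volume a b :=
      fun a b => locInt_intervalIntegrable hg a b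
    have hdiff : f x - f y₀ = ∫ t in y₀..x, g t := by
      have := intervalIntegral.integral_add_adjacent_intervals (hint 0 y₀) (hint y₀ x)
      rw [hftc y₀, hftc x] at this
      linarith
    rw [hdiff]
    have habs : |∫ t in y₀..x, g t| ≤ ∫ t in y₀..x, |g t| :=
      intervalIntegral.abs_integral_le_integral_abs hy₀le
    -- Cauchy–Schwarz on the interval
    have hCS : (∫ t in y₀..x, |g t|) ≤ Real.sqrt (x - y₀) * Real.sqrt B := by
      rw [intervalIntegral.integral_of_le hy₀le]
      set ν := volume.restrict (Set.Ioc y₀ x) with hν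
      haveI : IsFiniteMeasure ν := by
        constructor
        rw [hν, Measure.restrict_apply_univ, Real.volume_Ioc]
        exact ENNReal.ofReal_lt_top
      have hgmem : MemLp g 2 ν := by
        apply MemLp.restrict
        exact (memLp_two_iff_integrable_sq hg.aestronglyMeasurable).mpr hg2
      have habsmem : MemLp (fun t => |g t|) (ENNReal.ofReal 2) ν := by
        rw [show ENNReal.ofReal 2 = 2 by norm_num]
        exact hgmem.abs
      have honemem : MemLp (fun _ : ℝ => (1:ℝ)) (ENNReal.ofReal 2) ν := by
        rw [show ENNReal.ofReal 2 = 2 by norm_num]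
        exact memLp_const 1
      have := integral_mul_le_Lp_mul_Lq_of_nonneg
        (Real.holderConjugate_iff_eq_conjExponent (by norm_num) |>.mpr (by norm_num))
        (μ := ν) (Filter.Eventually.of_forall fun t => abs_nonneg (g t))
        (Filter.Eventually.of_forall fun _ => zero_le_one) habsmem honemem
      simp only [mul_one, Real.one_rpow] at this
      calc (∫ t in Set.Ioc y₀ x, |g t|) = ∫ t, |g t| ∂ν := rfl
        _ ≤ (∫ t, |g t| ^ (2:ℝ) ∂ν) ^ (1/(2:ℝ)) * (∫ _, (1:ℝ) ∂ν) ^ (1/(2:ℝ)) := by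
            exact_mod_cast this
        _ ≤ Real.sqrt (x - y₀) * Real.sqrt B := by
            rw [mul_comm]
            apply mul_le_mul
            · rw [integral_const, smul_eq_mul, mul_one, hν, measureReal_def, Measure.restrict_apply_univ,
                Real.volume_Ioc, ENNReal.toReal_ofReal (by linarith), Real.sqrt_eq_rpow]
            · rw [Real.sqrt_eq_rpow]
              apply Real.rpow_le_rpow (integral_nonneg fun t => Real.rpow_nonneg (abs_nonneg _) _)
                _ (by norm_num)
              have e2 : (fun t => |g t| ^ (2:ℝ)) = (fun t => g t ^ 2) :=
                funext fun t => abs_rpow_two _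
              rw [e2]
              calc (∫ t, g t ^ 2 ∂ν) ≤ ∫ t, g t ^ 2 :=
                    setIntegral_le_integral hg2 (Filter.Eventually.of_forall fun t => sq_nonneg _)
                _ = B := rfl
            · apply Real.rpow_nonneg
              exact integral_nonneg fun t => Real.rpow_nonneg (abs_nonneg _) _
            · exact Real.sqrt_nonneg _
    have hxy : Real.sqrt (x - y₀) ≤ Real.sqrt L := Real.sqrt_le_sqrt (by linarith)
    calc |∫ t in y₀..x, g t| ≤ ∫ t in y₀..x, |g t| := habs
      _ ≤ Real.sqrt (x - y₀) * Real.sqrt B := hCS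
      _ ≤ Real.sqrt L * Real.sqrt B :=
          mul_le_mul_of_nonneg_right hxy (Real.sqrt_nonneg _)
  -- combine
  have hsA2 : Real.sqrt A * Real.sqrt A = A := Real.mul_self_sqrt hA0
  have hsB2 : Real.sqrt B * Real.sqrt B = B := Real.mul_self_sqrt hB0
  have hALB : A / L = Real.sqrt A * Real.sqrt B := by
    rw [hL]
    field_simp
    linear_combination -hsA2
  have hLB : L * B = Real.sqrt A * Real.sqrt B := by
    rw [hL]
    field_simp
    linear_combination -hsB2
  have hfy₀ : f y₀ ^ 2 ≤ Real.sqrt A * Real.sqrt B := by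
    rw [← hALB, le_div_iff₀ hLpos]
    linarith [bound1]
  have htri : |f x| ≤ |f y₀| + |f x - f y₀| := by
    have : f x = f y₀ + (f x - f y₀) := by ring
    calc |f x| = |f y₀ + (f x - f y₀)| := by rw [← this]
      _ ≤ |f y₀| + |f x - f y₀| := abs_add_le _ _
  have h1 : |f y₀| ≤ Real.sqrt (Real.sqrt A * Real.sqrt B) := by
    rw [← Real.sqrt_sq_eq_abs]
    exact Real.sqrt_le_sqrt hfy₀
  have h2 : |f x - f y₀| ≤ Real.sqrt (Real.sqrt A * Real.sqrt B) := by
    calc |f x - f y₀| ≤ Real.sqrt L * Real.sqrt B := bound2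
      _ = Real.sqrt (L * B) := (Real.sqrt_mul hLpos.le B).symm
      _ = Real.sqrt (Real.sqrt A * Real.sqrt B) := by rw [hLB]
  have hm0 : 0 ≤ Real.sqrt (Real.sqrt A * Real.sqrt B) := Real.sqrt_nonneg _
  have hsq : Real.sqrt (Real.sqrt A * Real.sqrt B) ^ 2 = Real.sqrt A * Real.sqrt B :=
    Real.sq_sqrt (by positivity)
  have habs : |f x| ≤ 2 * Real.sqrt (Real.sqrt A * Real.sqrt B) := by linarith
  calc f x ^ 2 = |f x| ^ 2 := (sq_abs _).symm
    _ ≤ (2 * Real.sqrt (Real.sqrt A * Real.sqrt B)) ^ 2 := by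
        apply pow_le_pow_left₀ (abs_nonneg _) habs
    _ = 4 * (Real.sqrt A * Real.sqrt B) := by rw [mul_pow, hsq]; norm_num

lemma gridLpPow_comm (p : ℝ) (f g : ℤ → ℝ → ℝ) : gridLpPow p f g = gridLpPow p g f :=
  add_comm _ _

lemma line_sq_facts {F G : ℤ → ℝ → ℝ} (hmeas : ∀ j, AEStronglyMeasurable (F j) volume)
    (hfin : gridLpPow 2 F G ≠ ⊤) (j : ℤ) :
    Integrable (fun t => F j t ^ 2) ∧ (∫ t, F j t ^ 2) ≤ (gridLpPow 2 F G).toReal := by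
  have hle : (∫⁻ t, (‖F j t‖₊ : ℝ≥0∞) ^ (2:ℝ)) ≤ gridLpPow 2 F G :=
    le_trans (ENNReal.le_tsum j) le_self_add
  have hne : (∫⁻ t, (‖F j t‖₊ : ℝ≥0∞) ^ (2:ℝ)) ≠ ⊤ := ne_top_of_le_ne_top hfin hle
  have hi := integrable_sq_of_lintegral_ne_top (hmeas j) hne
  exact ⟨hi, by rw [integral_sq_eq_toReal hi]; exact ENNReal.toReal_mono hfin hle⟩

lemma sup_bound_h {u : GridFunc} (hu : u.MemH1) (j : ℤ) (x : ℝ) :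
    u.h j x ^ 2 ≤ 4 * (Real.sqrt (gridLpPow 2 u.h u.w).toReal *
      Real.sqrt (gridLpPow 2 u.hd u.wd).toReal) := by
  obtain ⟨hc, -, hld, -, hftc, -, hfin, hdfin⟩ := hu
  obtain ⟨hi, hile⟩ := line_sq_facts (fun j => (hc j).aestronglyMeasurable) hfin.ne j
  obtain ⟨hgi, hgile⟩ := line_sq_facts (fun j => (hld j).aestronglyMeasurable) hdfin.ne j
  have h1 := oneDim_sup_sq (hc j) (hld j) (hftc j) hi hgi x
  have h2 : Real.sqrt (∫ t, u.h j t ^ 2) ≤ Real.sqrt (gridLpPow 2 u.h u.w).toReal :=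
    Real.sqrt_le_sqrt hile
  have h3 : Real.sqrt (∫ t, u.hd j t ^ 2) ≤ Real.sqrt (gridLpPow 2 u.hd u.wd).toReal :=
    Real.sqrt_le_sqrt hgile
  calc u.h j x ^ 2 ≤ 4 * (Real.sqrt (∫ t, u.h j t ^ 2) * Real.sqrt (∫ t, u.hd j t ^ 2)) := h1
    _ ≤ 4 * (Real.sqrt (gridLpPow 2 u.h u.w).toReal *
        Real.sqrt (gridLpPow 2 u.hd u.wd).toReal) := by
      have := mul_le_mul h2 h3 (Real.sqrt_nonneg _) (Real.sqrt_nonneg _)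
      linarith

lemma sup_bound_w {u : GridFunc} (hu : u.MemH1) (k : ℤ) (y : ℝ) :
    u.w k y ^ 2 ≤ 4 * (Real.sqrt (gridLpPow 2 u.h u.w).toReal *
      Real.sqrt (gridLpPow 2 u.hd u.wd).toReal) := by
  obtain ⟨-, hc, -, hld, -, hftc, hfin, hdfin⟩ := hu
  rw [gridLpPow_comm 2 u.h u.w] at hfin ⊢
  rw [gridLpPow_comm 2 u.hd u.wd] at hdfin ⊢
  obtain ⟨hi, hile⟩ := line_sq_facts (fun k => (hc k).aestronglyMeasurable) hfin.ne k
  obtain ⟨hgi, hgile⟩ := line_sq_facts (fun k => (hld k).aestronglyMeasurable) hdfin.ne k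
  have h1 := oneDim_sup_sq (hc k) (hld k) (hftc k) hi hgi y
  have h2 : Real.sqrt (∫ t, u.w k t ^ 2) ≤ Real.sqrt (gridLpPow 2 u.w u.h).toReal :=
    Real.sqrt_le_sqrt hile
  have h3 : Real.sqrt (∫ t, u.wd k t ^ 2) ≤ Real.sqrt (gridLpPow 2 u.wd u.hd).toReal :=
    Real.sqrt_le_sqrt hgile
  calc u.w k y ^ 2 ≤ 4 * (Real.sqrt (∫ t, u.w k t ^ 2) * Real.sqrt (∫ t, u.wd k t ^ 2)) := h1
    _ ≤ _ := by
      have := mul_le_mul h2 h3 (Real.sqrt_nonneg _) (Real.sqrt_nonneg _)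
      linarith

lemma nnnorm_rpow_p_le {t M2 p : ℝ} (hp : 4 ≤ p) (h2 : t^2 ≤ M2) :
    (‖t‖₊ : ℝ≥0∞) ^ (p:ℝ) ≤ ENNReal.ofReal (M2 ^ ((p-2)/2)) * (‖t‖₊ : ℝ≥0∞) ^ (2:ℝ) := by
  rcases eq_or_ne t 0 with rfl | ht
  · have h0 : (‖(0:ℝ)‖₊ : ℝ≥0∞) = 0 := by simp
    rw [h0, ENNReal.zero_rpow_of_pos (by linarith)]
    exact zero_le
  · have hnz : (‖t‖₊ : ℝ≥0∞) ≠ 0 := by simpa using ht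
    have hM2 : (0:ℝ) ≤ M2 := le_trans (sq_nonneg t) h2
    have step1 : (‖t‖₊ : ℝ≥0∞) ^ (p:ℝ)
        = (‖t‖₊ : ℝ≥0∞) ^ ((p-2:ℝ)) * (‖t‖₊ : ℝ≥0∞) ^ (2:ℝ) := by
      rw [← ENNReal.rpow_add _ _ hnz ENNReal.coe_ne_top]
      norm_num
    have step2 : (‖t‖₊ : ℝ≥0∞) ^ ((p-2:ℝ)) ≤ ENNReal.ofReal (M2 ^ ((p-2)/2)) := by
      have e1 : (‖t‖₊ : ℝ≥0∞) ^ ((p-2:ℝ))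
          = ((‖t‖₊ : ℝ≥0∞) ^ (2:ℝ)) ^ ((p-2)/2 : ℝ) := by
        rw [← ENNReal.rpow_mul]
        congr 1
        ring
      rw [e1, nnnorm_rpow_eq_ofReal t 2 (by norm_num), abs_rpow_two,
        ← ENNReal.ofReal_rpow_of_nonneg hM2 (by linarith : (0:ℝ) ≤ (p-2)/2)]
      exact ENNReal.rpow_le_rpow (ENNReal.ofReal_le_ofReal h2) (by linarith)
    rw [step1]
    exact mul_le_mul_left step2 _

lemma gridLpPow_p_le {u : GridFunc} {p : ℝ} (hu : u.MemH1) (hp : 4 ≤ p) :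
    gridLpPow p u.h u.w
      ≤ ENNReal.ofReal ((4 * (Real.sqrt (gridLpPow 2 u.h u.w).toReal *
          Real.sqrt (gridLpPow 2 u.hd u.wd).toReal)) ^ ((p-2)/2))
        * gridLpPow 2 u.h u.w := by
  set M2 := 4 * (Real.sqrt (gridLpPow 2 u.h u.w).toReal *
    Real.sqrt (gridLpPow 2 u.hd u.wd).toReal) with hM2
  set C := ENNReal.ofReal (M2 ^ ((p-2)/2)) with hC
  have hline : ∀ j : ℤ, (∫⁻ x, (‖u.h j x‖₊ : ℝ≥0∞) ^ (p:ℝ))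
      ≤ C * ∫⁻ x, (‖u.h j x‖₊ : ℝ≥0∞) ^ (2:ℝ) := by
    intro j
    rw [← lintegral_const_mul' _ _ ENNReal.ofReal_ne_top]
    exact lintegral_mono fun x => nnnorm_rpow_p_le hp (sup_bound_h hu j x)
  have hlinew : ∀ k : ℤ, (∫⁻ y, (‖u.w k y‖₊ : ℝ≥0∞) ^ (p:ℝ))
      ≤ C * ∫⁻ y, (‖u.w k y‖₊ : ℝ≥0∞) ^ (2:ℝ) := by
    intro k
    rw [← lintegral_const_mul' _ _ ENNReal.ofReal_ne_top]
    exact lintegral_mono fun y => nnnorm_rpow_p_le hp (sup_bound_w hu k y)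
  calc gridLpPow p u.h u.w
      ≤ (∑' j : ℤ, C * ∫⁻ x, (‖u.h j x‖₊ : ℝ≥0∞) ^ (2:ℝ))
        + (∑' k : ℤ, C * ∫⁻ y, (‖u.w k y‖₊ : ℝ≥0∞) ^ (2:ℝ)) :=
        add_le_add (ENNReal.tsum_le_tsum hline) (ENNReal.tsum_le_tsum hlinew)
    _ = C * gridLpPow 2 u.h u.w := by
        rw [ENNReal.tsum_mul_left, ENNReal.tsum_mul_left, gridLpPow, mul_add]

lemma energy_lower {p μ : ℝ} (hp₄ : 4 ≤ p) (hp₆ : p < 6) (hμ : 0 < μ) :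
    ∃ b : ℝ, ∀ u : GridFunc, u.MemH1 → u.mass = μ → b ≤ u.energy p := by
  set θ : ℝ := (p-2)/4 with hθ
  have hθ0 : 0 ≤ θ := by rw [hθ]; linarith
  have hθ1 : θ < 1 := by rw [hθ]; linarith
  set A : ℝ := (1/p) * ((4 * Real.sqrt μ) ^ ((p-2)/2 : ℝ) * μ) with hAdef
  have hA0 : 0 ≤ A := by
    apply mul_nonneg (by positivity)
    apply mul_nonneg (Real.rpow_nonneg (by positivity) _) hμ.le
  set R : ℝ := max 1 ((2*A) ^ ((4:ℝ)/(6-p))) with hRdef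
  have hR1 : (1:ℝ) ≤ R := le_max_left _ _
  have hR0 : 0 < R := lt_of_lt_of_le one_pos hR1
  refine ⟨-(A * R ^ (θ:ℝ)), ?_⟩
  intro u hu hm
  set D : ℝ := (gridLpPow 2 u.hd u.wd).toReal with hDdef
  have hD0 : 0 ≤ D := ENNReal.toReal_nonneg
  -- the Lp bound
  have hPle : (gridLpPow p u.h u.w).toReal ≤ A * p * D ^ (θ:ℝ) := by
    have h1 := gridLpPow_p_le hu hp₄
    have hm' : (gridLpPow 2 u.h u.w).toReal = μ := hm
    have hne : ENNReal.ofReal ((4 * (Real.sqrt μ * Real.sqrt D)) ^ ((p-2)/2 : ℝ))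
        * gridLpPow 2 u.h u.w ≠ ⊤ :=
      ENNReal.mul_ne_top ENNReal.ofReal_ne_top hu.2.2.2.2.2.2.1.ne
    rw [hm'] at h1
    have h2 := ENNReal.toReal_mono hne h1
    rw [ENNReal.toReal_mul, ENNReal.toReal_ofReal (Real.rpow_nonneg (by positivity) _),
      hm'] at h2
    have key : (4 * (Real.sqrt μ * Real.sqrt D)) ^ ((p-2)/2 : ℝ)
        = (4 * Real.sqrt μ) ^ ((p-2)/2 : ℝ) * D ^ (θ:ℝ) := by
      rw [show 4 * (Real.sqrt μ * Real.sqrt D) = (4 * Real.sqrt μ) * Real.sqrt D by ring,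
        Real.mul_rpow (by positivity) (Real.sqrt_nonneg _), Real.sqrt_eq_rpow D,
        ← Real.rpow_mul hD0]
      congr 1
      rw [hθ]; ring
    rw [key] at h2
    calc (gridLpPow p u.h u.w).toReal
        ≤ (4 * Real.sqrt μ) ^ ((p-2)/2 : ℝ) * D ^ (θ:ℝ) * μ := h2
      _ = A * p * D ^ (θ:ℝ) := by rw [hAdef]; field_simp
  have hE : (1/2) * D - (1/p) * (A * p * D ^ (θ:ℝ)) ≤ u.energy p := by
    rw [GridFunc.energy, ← hDdef]
    have : (1/p) * (gridLpPow p u.h u.w).toReal ≤ (1/p) * (A * p * D ^ (θ:ℝ)) :=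
      mul_le_mul_of_nonneg_left hPle (by positivity)
    linarith
  have hsimpl : (1/p) * (A * p * D ^ (θ:ℝ)) = A * D ^ (θ:ℝ) := by
    field_simp
  rw [hsimpl] at hE
  rcases le_or_gt D R with hDR | hDR
  · -- small D
    have h4 : A * D ^ (θ:ℝ) ≤ A * R ^ (θ:ℝ) :=
      mul_le_mul_of_nonneg_left (Real.rpow_le_rpow hD0 hDR hθ0) hA0
    nlinarith
  · -- large D
    have hDpos : 0 < D := lt_trans hR0 hDR
    have h2C : 2*A ≤ D ^ ((1:ℝ) - θ) := by
      rcases eq_or_lt_of_le hA0 with hAz | hApos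
      · calc 2*A = 0 := by rw [← hAz]; ring
          _ ≤ D ^ ((1:ℝ) - θ) := Real.rpow_nonneg hD0 _
      · have hb : (2*A) ^ ((4:ℝ)/(6-p)) ≤ D := le_trans (le_max_right _ _) hDR.le
        have h5 : ((2*A) ^ ((4:ℝ)/(6-p))) ^ ((1:ℝ) - θ) ≤ D ^ ((1:ℝ) - θ) :=
          Real.rpow_le_rpow (Real.rpow_nonneg (by linarith) _) hb (by rw [hθ]; linarith)
        rw [← Real.rpow_mul (by linarith : (0:ℝ) ≤ 2*A)] at h5
        have he : (4:ℝ)/(6-p) * ((1:ℝ) - θ) = 1 := by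
          have h6p : (6:ℝ) - p ≠ 0 := by linarith
          rw [hθ]
          field_simp
          ring
        rw [he, Real.rpow_one] at h5
        exact h5
    have h6 : A * D ^ (θ:ℝ) ≤ (1/2) * D := by
      have h7 : (2*A) * D ^ (θ:ℝ) ≤ D ^ ((1:ℝ) - θ) * D ^ (θ:ℝ) :=
        mul_le_mul_of_nonneg_right h2C (Real.rpow_nonneg hD0 _)
      rw [← Real.rpow_add hDpos] at h7
      simp only [sub_add_cancel, Real.rpow_one] at h7
      linarith
    have hb0 : 0 ≤ A * R ^ (θ:ℝ) := mul_nonneg hA0 (Real.rpow_nonneg hR0.le _)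
    linarith

lemma grad_pos_of_mass_pos {u : GridFunc} (hu : u.MemH1) (hm : 0 < u.mass) :
    0 < (gridLpPow 2 u.hd u.wd).toReal := by
  obtain ⟨hc, hcw, hld, hldw, hftc, hftcw, hfin, hdfin⟩ := hu
  by_contra hcon
  push_neg at hcon
  have hz : (gridLpPow 2 u.hd u.wd).toReal = 0 := le_antisymm hcon ENNReal.toReal_nonneg
  have h0 : gridLpPow 2 u.hd u.wd = 0 := by
    rcases (ENNReal.toReal_eq_zero_iff _).mp hz with h | h
    · exact h
    · exact absurd h hdfin.ne
  rw [gridLpPow, add_eq_zero] at h0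
  obtain ⟨h0h, h0w⟩ := h0
  have hdz : ∀ j : ℤ, ∀ᵐ t, u.hd j t = 0 := by
    intro j
    have hjz : (∫⁻ t, (‖u.hd j t‖₊ : ℝ≥0∞) ^ (2:ℝ)) = 0 := by
      have := ENNReal.tsum_eq_zero.mp h0h j
      exact this
    have hmeas : AEMeasurable (fun t => (‖u.hd j t‖₊ : ℝ≥0∞) ^ (2:ℝ)) volume := by
      exact ((hld j).aestronglyMeasurable.aemeasurable.nnnorm.coe_nnreal_ennreal).pow_const _
    have := (lintegral_eq_zero_iff' hmeas).mp hjz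
    filter_upwards [this] with t ht
    simp only [Pi.zero_apply, ENNReal.rpow_eq_zero_iff] at ht
    rcases ht with ⟨h1, -⟩ | ⟨h1, -⟩
    · simpa using h1
    · exact absurd h1 ENNReal.coe_ne_top
  have hwz : ∀ k : ℤ, ∀ᵐ t, u.wd k t = 0 := by
    intro k
    have hjz : (∫⁻ t, (‖u.wd k t‖₊ : ℝ≥0∞) ^ (2:ℝ)) = 0 := ENNReal.tsum_eq_zero.mp h0w k
    have hmeas : AEMeasurable (fun t => (‖u.wd k t‖₊ : ℝ≥0∞) ^ (2:ℝ)) volume :=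
      ((hldw k).aestronglyMeasurable.aemeasurable.nnnorm.coe_nnreal_ennreal).pow_const _
    have := (lintegral_eq_zero_iff' hmeas).mp hjz
    filter_upwards [this] with t ht
    simp only [Pi.zero_apply, ENNReal.rpow_eq_zero_iff] at ht
    rcases ht with ⟨h1, -⟩ | ⟨h1, -⟩
    · simpa using h1
    · exact absurd h1 ENNReal.coe_ne_top
  -- so each h j and w k is constant, hence zero by square-integrability
  have hconst : ∀ (f d : ℝ → ℝ), (∀ᵐ t, d t = 0) →
      (∀ x, (∫ t in (0:ℝ)..x, d t) = f x - f 0) → ∀ x, f x = f 0 := by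
    intro f d hd hf x
    have : (∫ t in (0:ℝ)..x, d t) = ∫ t in (0:ℝ)..x, (0:ℝ) :=
      intervalIntegral.integral_congr_ae (by filter_upwards [hd] with t ht _; exact ht)
    rw [intervalIntegral.integral_zero] at this
    have := hf x
    rw [‹(∫ t in (0:ℝ)..x, d t) = 0›] at this
    linarith
  have hzero : ∀ (f : ℝ → ℝ), (∀ x, f x = f 0) →
      (∫⁻ t, (‖f t‖₊ : ℝ≥0∞) ^ (2:ℝ)) ≠ ⊤ → ∀ x, f x = 0 := by
    intro f hf hfin x
    by_contra hne
    have hc0 : f 0 ≠ 0 := fun h => hne (by rw [hf x, h])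
    have : (∫⁻ t, (‖f t‖₊ : ℝ≥0∞) ^ (2:ℝ)) = ∫⁻ _ : ℝ, (‖f 0‖₊ : ℝ≥0∞) ^ (2:ℝ) := by
      apply lintegral_congr
      intro t
      rw [hf t]
    rw [this, lintegral_const] at hfin
    have hcpos : (0:ℝ≥0∞) < (‖f 0‖₊ : ℝ≥0∞) ^ (2:ℝ) := by
      apply ENNReal.rpow_pos _ ENNReal.coe_ne_top
      simpa using hc0
    rw [Real.volume_univ, ENNReal.mul_top hcpos.ne'] at hfin
    exact hfin rfl
  have hallh : ∀ j : ℤ, ∀ x, u.h j x = 0 := by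
    intro j
    apply hzero (u.h j) (hconst (u.h j) (u.hd j) (hdz j) (hftc j))
    exact ne_top_of_le_ne_top hfin.ne (le_trans (ENNReal.le_tsum j) le_self_add)
  have hallw : ∀ k : ℤ, ∀ y, u.w k y = 0 := by
    intro k
    apply hzero (u.w k) (hconst (u.w k) (u.wd k) (hwz k) (hftcw k))
    exact ne_top_of_le_ne_top hfin.ne (le_trans (ENNReal.le_tsum k) le_add_self)
  have : u.mass = 0 := by
    rw [GridFunc.mass, gridLpPow]
    have e1 : ∀ j : ℤ, (∫⁻ x, (‖u.h j x‖₊ : ℝ≥0∞) ^ (2:ℝ)) = 0 := by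
      intro j
      have : ∀ x, (‖u.h j x‖₊ : ℝ≥0∞) ^ (2:ℝ) = 0 := by
        intro x
        rw [hallh j x]
        simp [ENNReal.zero_rpow_of_pos]
      simp only [this, lintegral_zero]
    have e2 : ∀ k : ℤ, (∫⁻ y, (‖u.w k y‖₊ : ℝ≥0∞) ^ (2:ℝ)) = 0 := by
      intro k
      have : ∀ y, (‖u.w k y‖₊ : ℝ≥0∞) ^ (2:ℝ) = 0 := by
        intro y
        rw [hallw k y]
        simp [ENNReal.zero_rpow_of_pos]
      simp only [this, lintegral_zero]
    simp only [e1, e2, tsum_zero, add_zero, ENNReal.toReal_zero]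
  rw [this] at hm
  exact lt_irrefl 0 hm

lemma mass_eq_zero_of_zero {u : GridFunc} (hh : ∀ j x, u.h j x = 0)
    (hw : ∀ k y, u.w k y = 0) : u.mass = 0 := by
  rw [GridFunc.mass, gridLpPow]
  have e1 : ∀ j : ℤ, (∫⁻ x, (‖u.h j x‖₊ : ℝ≥0∞) ^ (2:ℝ)) = 0 := by
    intro j
    have : ∀ x, (‖u.h j x‖₊ : ℝ≥0∞) ^ (2:ℝ) = 0 := by
      intro x
      rw [hh j x]
      simp [ENNReal.zero_rpow_of_pos]
    simp only [this, lintegral_zero]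
  have e2 : ∀ k : ℤ, (∫⁻ y, (‖u.w k y‖₊ : ℝ≥0∞) ^ (2:ℝ)) = 0 := by
    intro k
    have : ∀ y, (‖u.w k y‖₊ : ℝ≥0∞) ^ (2:ℝ) = 0 := by
      intro y
      rw [hw k y]
      simp [ENNReal.zero_rpow_of_pos]
    simp only [this, lintegral_zero]
  simp only [e1, e2, tsum_zero, add_zero, ENNReal.toReal_zero]

lemma nonzero_of_mass_pos {u : GridFunc} (hm : 0 < u.mass) : u.Nonzero := by
  by_contra hcon
  rw [GridFunc.Nonzero] at hcon
  push_neg at hcon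
  obtain ⟨h1, h2⟩ := hcon
  rw [mass_eq_zero_of_zero h1 h2] at hm
  exact lt_irrefl 0 hm

end AuxLemmas

noncomputable section

/-- **Energy-level dichotomy at and beyond the critical mass**: for
`p ∈ [4,6)` and `μ > 0`, with `K_p` the optimal Gagliardo–Nirenberg constant
and `μ_p = (p/(2K_p))^{2/(p−2)}` the critical mass: `ℰ_p(μ) = 0` if
`μ ≤ μ_p`, while `−∞ < ℰ_p(μ) < 0` if `μ > μ_p`. -/
theorem grid_level_dichotomy (p K μ : ℝ) (hp₄ : 4 ≤ p) (hp₆ : p < 6)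
    (hK : IsLUB (gnSet p) K) (hμ : 0 < μ) :
    (μ ≤ critMass p K → IsGLB (energySet p μ) 0) ∧
    (critMass p K < μ →
      (∃ b : ℝ, ∀ u : GridFunc, u.MemH1 → u.mass = μ → b ≤ u.energy p) ∧
      (∃ u : GridFunc, u.MemH1 ∧ u.mass = μ ∧ u.energy p < 0)) := by
  have hp0 : (0:ℝ) < p := by linarith
  have hp2 : (0:ℝ) < p - 2 := by linarith
  have hKpos : 0 < K := K_pos hp0 hK
  constructor
  · -- subcritical / critical mass : ground state level is 0
    intro hle
    have hKmu : K * μ ^ ((p-2)/2 : ℝ) ≤ p / 2 := by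
      have hbase : (0:ℝ) < p / (2*K) := by positivity
      have h1 : μ ^ ((p-2)/2 : ℝ) ≤ (critMass p K) ^ ((p-2)/2 : ℝ) :=
        Real.rpow_le_rpow hμ.le hle (by linarith)
      rw [critMass, ← Real.rpow_mul hbase.le] at h1
      have he : (2/(p-2)) * ((p-2)/2) = 1 := by field_simp
      rw [he, Real.rpow_one] at h1
      calc K * μ ^ ((p-2)/2 : ℝ) ≤ K * (p / (2*K)) :=
            mul_le_mul_of_nonneg_left h1 hKpos.le
        _ = p / 2 := by field_simp
    constructor
    · -- 0 is a lower bound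
      rintro e ⟨u, hu, hm, rfl⟩
      set D := (gridLpPow 2 u.hd u.wd).toReal with hDdef
      have hmass : 0 < u.mass := hm ▸ hμ
      have hD : 0 < D := grad_pos_of_mass_pos hu hmass
      rcases eq_or_ne (gridLpPow p u.h u.w) ⊤ with htop | hfin
      · rw [GridFunc.energy, htop, ← hDdef]
        simp only [ENNReal.toReal_top, mul_zero, sub_zero]
        positivity
      · have hnz := nonzero_of_mass_pos hmass
        have hQ : u.gnQuot p ≤ K := hK.1 (mem_gnSet u hu hnz)
        set P := (gridLpPow p u.h u.w).toReal with hPdef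
        have hm' : (gridLpPow 2 u.h u.w).toReal = μ := hm
        have hμe : (0:ℝ) < μ ^ ((p-2)/2 : ℝ) := Real.rpow_pos_of_pos hμ _
        have hquot : u.gnQuot p = P / (μ ^ ((p-2)/2 : ℝ) * D) := by
          rw [GridFunc.gnQuot, hm', ← hPdef, ← hDdef]
        rw [hquot, div_le_iff₀ (by positivity)] at hQ
        have hPle : (1/p) * P ≤ (1/2) * D := by
          have h2 : (1/p) * P ≤ (1/p) * (K * (μ ^ ((p-2)/2 : ℝ) * D)) := by
            apply mul_le_mul_of_nonneg_left _ (by positivity)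
            linarith
          have h3 : (1/p) * (K * (μ ^ ((p-2)/2 : ℝ) * D)) ≤ (1/2) * D := by
            have h4 : K * μ ^ ((p-2)/2 : ℝ) * D ≤ (p/2) * D :=
              mul_le_mul_of_nonneg_right hKmu hD.le
            have h5 : (1/p) * ((p/2) * D) = (1/2) * D := by field_simp
            calc (1/p) * (K * (μ ^ ((p-2)/2 : ℝ) * D))
                = (1/p) * (K * μ ^ ((p-2)/2 : ℝ) * D) := by ring
              _ ≤ (1/p) * ((p/2) * D) :=
                  mul_le_mul_of_nonneg_left h4 (by positivity)
              _ = (1/2) * D := h5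
          linarith
        show (0:ℝ) ≤ (1/2) * D - (1/p) * P
        linarith
    · -- 0 is the greatest lower bound
      intro b hb
      by_contra hb0
      push_neg at hb0
      have hs2 : (0:ℝ) < Real.sqrt 2 := Real.sqrt_pos.mpr (by norm_num)
      set σ := b / (2 * Real.sqrt 2 * μ) with hσdef
      have hσ : 0 < σ := by positivity
      obtain ⟨u, hu, hm, hE⟩ := exists_energy_le hp0 hμ hσ
      have hble : b ≤ u.energy p := hb ⟨u, hu, hm, rfl⟩
      have heq : Real.sqrt 2 * σ * μ = b / 2 := by
        rw [hσdef]
        field_simp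
      rw [heq] at hE
      linarith
  · -- supercritical mass
    intro hgt
    refine ⟨energy_lower hp₄ hp₆ hμ, ?_⟩
    -- derive μ^((p-2)/2) > p/(2K)
    have hμe : (0:ℝ) < μ ^ ((p-2)/2 : ℝ) := Real.rpow_pos_of_pos hμ _
    have hgt' : p / (2*K) < μ ^ ((p-2)/2 : ℝ) := by
      have hbase : (0:ℝ) < p / (2*K) := by positivity
      have h1 : (critMass p K) ^ ((p-2)/2 : ℝ) < μ ^ ((p-2)/2 : ℝ) :=
        Real.rpow_lt_rpow (Real.rpow_nonneg (by positivity) _) hgt (by linarith)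
      rwa [critMass, ← Real.rpow_mul hbase.le,
        show (2/(p-2)) * ((p-2)/2) = 1 by field_simp, Real.rpow_one] at h1
    have hc₀ : p / (2 * μ ^ ((p-2)/2 : ℝ)) < K := by
      rw [div_lt_iff₀ (by positivity)]
      rw [div_lt_iff₀ (by positivity)] at hgt'
      nlinarith
    obtain ⟨q, hqmem, hq1, -⟩ := hK.exists_between hc₀
    obtain ⟨v, hv, hvnz, rfl⟩ := hqmem
    set Q := v.gnQuot p with hQdef
    set P := (gridLpPow p v.h v.w).toReal with hPdef
    set m := (gridLpPow 2 v.h v.w).toReal with hmdef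
    set Dv := (gridLpPow 2 v.hd v.wd).toReal with hDvdef
    set e : ℝ := (p-2)/2 with hedef
    have hQpos : 0 < Q := lt_trans (by positivity) hq1
    have hquot : Q = P / (m ^ (e:ℝ) * Dv) := rfl
    have hden0 : m ^ (e:ℝ) * Dv ≠ 0 := by
      intro hc
      rw [hquot, hc, div_zero] at hQpos
      exact lt_irrefl 0 hQpos
    have hden : 0 < m ^ (e:ℝ) * Dv := by
      rcases (mul_nonneg (Real.rpow_nonneg ENNReal.toReal_nonneg _)
        ENNReal.toReal_nonneg).lt_or_eq with h | h
      · exact h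
      · exact absurd h.symm hden0
    have hm0 : 0 < m := by
      rcases ENNReal.toReal_nonneg.lt_or_eq (a := (0:ℝ)) (b := m) with h | h
      · exact h
      · exfalso
        apply hden0
        rw [← h, Real.zero_rpow (by rw [hedef]; positivity : (e:ℝ) ≠ 0), zero_mul]
    have hDv : 0 < Dv := by
      rcases ENNReal.toReal_nonneg.lt_or_eq (a := (0:ℝ)) (b := Dv) with h | h
      · exact h
      · exfalso; apply hden0; rw [← h, mul_zero]
    have hPeq : P = Q * (m ^ (e:ℝ) * Dv) := by
      rw [hquot]
      field_simp
    have hPpos : 0 < P := hPeq ▸ mul_pos hQpos hden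
    have hPne : gridLpPow p v.h v.w ≠ ⊤ := by
      intro hc
      rw [hPdef, hc, ENNReal.toReal_top] at hPpos
      exact lt_irrefl 0 hPpos
    -- the rescaled competitor
    set s := μ / m with hsdef
    have hs : 0 < s := by positivity
    set c := Real.sqrt s with hcdef
    have hcpos : 0 < c := Real.sqrt_pos.mpr hs
    have hc2 : c ^ 2 = s := Real.sq_sqrt hs.le
    refine ⟨⟨fun j x => c * v.h j x, fun k y => c * v.w k y,
      fun j x => c * v.hd j x, fun k y => c * v.wd k y,
      fun j k => by show c * v.h j (k:ℝ) = c * v.w k (j:ℝ); rw [v.compat]⟩, ?_, ?_, ?_⟩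
    · -- MemH1
      obtain ⟨hc1, hc2', hl1, hl2, hf1, hf2, hfin, hdfin⟩ := hv
      refine ⟨fun j => continuous_const.mul (hc1 j), fun k => continuous_const.mul (hc2' k),
        fun j => by have := (hl1 j).smul c; exact this,
        fun k => by have := (hl2 k).smul c; exact this,
        fun j x => by rw [intervalIntegral.integral_const_mul, hf1 j x]; ring,
        fun k y => by rw [intervalIntegral.integral_const_mul, hf2 k y]; ring, ?_, ?_⟩
      · show gridLpPow 2 (fun j x => c * v.h j x) (fun k y => c * v.w k y) < ⊤
        rw [gridLpPow_smul (by norm_num : (0:ℝ) < 2) c v.h v.w]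
        exact ENNReal.mul_lt_top ENNReal.ofReal_lt_top hfin
      · show gridLpPow 2 (fun j x => c * v.hd j x) (fun k y => c * v.wd k y) < ⊤
        rw [gridLpPow_smul (by norm_num : (0:ℝ) < 2) c v.hd v.wd]
        exact ENNReal.mul_lt_top ENNReal.ofReal_lt_top hdfin
    · -- mass = μ
      show (gridLpPow 2 (fun j x => c * v.h j x) (fun k y => c * v.w k y)).toReal = μ
      rw [gridLpPow_smul (by norm_num : (0:ℝ) < 2) c v.h v.w, ENNReal.toReal_mul,
        ENNReal.toReal_ofReal (Real.rpow_nonneg (abs_nonneg _) _), abs_rpow_two, hc2,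
        ← hmdef, hsdef]
      field_simp
    · -- negative energy
      show (1/2) * (gridLpPow 2 (fun j x => c * v.hd j x)
          (fun k y => c * v.wd k y)).toReal
        - (1/p) * (gridLpPow p (fun j x => c * v.h j x)
          (fun k y => c * v.w k y)).toReal < 0
      rw [gridLpPow_smul (by norm_num : (0:ℝ) < 2) c v.hd v.wd,
        gridLpPow_smul hp0 c v.h v.w, ENNReal.toReal_mul, ENNReal.toReal_mul,
        ENNReal.toReal_ofReal (Real.rpow_nonneg (abs_nonneg _) _),
        ENNReal.toReal_ofReal (Real.rpow_nonneg (abs_nonneg _) _),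
        abs_rpow_two, hc2, ← hDvdef, ← hPdef]
      have hcp : |c| ^ (p:ℝ) = s ^ (p/2 : ℝ) := by
        rw [abs_of_pos hcpos, hcdef, Real.sqrt_eq_rpow, ← Real.rpow_mul hs.le]
        congr 1
        ring
      rw [hcp]
      -- key algebra
      have hsplit : s ^ (p/2 : ℝ) = s * s ^ (e:ℝ) := by
        rw [hedef, show (p/2 : ℝ) = 1 + (p-2)/2 by ring, Real.rpow_add hs, Real.rpow_one]
      have hme : s ^ (e:ℝ) * m ^ (e:ℝ) = μ ^ (e:ℝ) := by
        rw [hsdef, Real.div_rpow hμ.le hm0.le,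
          div_mul_cancel₀ _ (ne_of_gt (Real.rpow_pos_of_pos hm0 _))]
      have h1 : s ^ (p/2 : ℝ) * P = s * Q * μ ^ (e:ℝ) * Dv := by
        rw [hsplit, hPeq]
        linear_combination (s * Q * Dv) * hme
      have hq1p : p < 2 * Q * μ ^ (e:ℝ) := by
        rw [div_lt_iff₀ (by positivity)] at hq1
        rw [hedef]
        nlinarith
      have h2 : 0 < s * Dv := mul_pos hs hDv
      have h3 : (1/2) * (s * Dv) < (1/p) * (s ^ (p/2 : ℝ) * P) := by
        rw [h1]
        rw [show (1/p) * (s * Q * μ ^ (e:ℝ) * Dv) = (s * Q * μ ^ (e:ℝ) * Dv) / p by ring,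
          lt_div_iff₀ hp0]
        nlinarith [mul_lt_mul_of_pos_left hq1p h2]
      linarith

end
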